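/- arXiv:2406.01548 — 2 statements merged into one kernel-verified Lean document; each statement's English description precedes it below -/
import Mathlib

section
/- Let f : ℝ^n × ℝ^m → ℝ^n satisfy ‖f(ξ,v) − f(ξ',v')‖ ≤ L_fξ‖ξ−ξ'‖ + L_fv‖v−v'‖ and g : ℝ^n × ℝ^m → ℝ satisfy |g(ξ,v) − g(ξ',v')| ≤ L_gξ‖ξ−ξ'‖ + L_gv‖v−v'‖. Define q⁽⁰⁾ constant and q⁽ᵏ⁾(ξ,v) = g(ξ,v) + γ·sup_{v'∈A(f(ξ,v))} q⁽ᵏ⁻¹⁾(f(ξ,v),v') with admissible action sets A(·) compact nonempty and satisfying: for all ξ,ξ' and v ∈ A(ξ) there exists v' ∈ A(ξ') with ‖v−v'‖ ≤ L_A‖ξ−ξ'‖. Then for all k ≥ 1, |q⁽ᵏ⁾(ξ,v) − q⁽ᵏ⁾(ξ',v')| ≤ L_ξ⁽ᵏ⁾‖ξ−ξ'‖ + L_v⁽ᵏ⁾‖v−v'‖, where L_ξ⁽¹⁾ = L_gξ, L_v⁽¹⁾ = L_gv, and L_ξ⁽ᵏ⁾ = γ L_ξ⁽ᵏ⁻¹⁾L_fξ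 + γ L_v⁽ᵏ⁻¹⁾L_A L_fξ + L_gξ, L_v⁽ᵏ⁾ = γ L_ξ⁽ᵏ⁻¹⁾L_fv + γ L_v⁽ᵏ⁻¹⁾L_A L_fv + L_gv. -/
/-!
The Bellman operator `Q ↦ g + γ · sup_{v' ∈ A(f ·)} Q(f ·, v')` maps a function with
Lipschitz constants `(K₁, K₂)` to one with constants `(γ (K₁ + K₂ L_A) L_fξ + L_gξ,
γ (K₁ + K₂ L_A) L_fv + L_gv)`: the only nontrivial point is that the value function
`x ↦ sup_{v ∈ A x} Q(x, v)` is `(K₁ + K₂ L_A)`-Lipschitz, because every maximiser candidate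
`v ∈ A x` can be matched by some `v' ∈ A x'` at distance at most `L_A · dist x x'`.
Starting from the constant `q⁽⁰⁾`, with constants `(0, 0)`, induction gives the claim.
-/

open Set

variable {X Y Z : Type*} [PseudoMetricSpace X] [PseudoMetricSpace Y] [PseudoMetricSpace Z]

def LipschitzBound₂ (F : X → Y → Z) (K₁ K₂ : ℝ) : Prop :=
  ∀ x x' y y', dist (F x y) (F x' y') ≤ K₁ * dist x x' + K₂ * dist y y'

def HasLipschitzSelection (A : X → Set Y) (L : ℝ) : Prop :=
  ∀ x x', ∀ y ∈ A x, ∃ y' ∈ A x', dist y y' ≤ L * dist x x'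

theorem lipschitzBound₂_const (c : Z) : LipschitzBound₂ (fun (_ : X) (_ : Y) => c) 0 0 := by
  intro x x' y y'
  simp

namespace LipschitzBound₂

variable {K₁ K₂ : ℝ}

theorem lipschitzWith_right {F : X → Y → Z} (hF : LipschitzBound₂ F K₁ K₂) (x : X) :
    LipschitzWith K₂.toNNReal (F x) :=
  LipschitzWith.of_dist_le' fun y y' => by simpa using hF x x y y'

theorem comp_left {W : Type*} [PseudoMetricSpace W] {V : Z → W} {K : ℝ} {f : X → Y → Z}
    (hV : ∀ z z', dist (V z) (V z') ≤ K * dist z z') (hK : 0 ≤ K) (hf : LipschitzBound₂ f K₁ K₂) :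
    LipschitzBound₂ (fun x y => V (f x y)) (K * K₁) (K * K₂) := fun x x' y y' =>
  calc dist (V (f x y)) (V (f x' y')) ≤ K * dist (f x y) (f x' y') := hV _ _
    _ ≤ K * (K₁ * dist x x' + K₂ * dist y y') := by gcongr; exact hf x x' y y'
    _ = K * K₁ * dist x x' + K * K₂ * dist y y' := by ring

theorem add {F G : X → Y → ℝ} {C₁ C₂ : ℝ} (hF : LipschitzBound₂ F K₁ K₂)
    (hG : LipschitzBound₂ G C₁ C₂) :
    LipschitzBound₂ (fun x y => F x y + G x y) (K₁ + C₁) (K₂ + C₂) := fun x x' y y' =>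
  calc dist (F x y + G x y) (F x' y' + G x' y')
      ≤ dist (F x y) (F x' y') + dist (G x y) (G x' y') := dist_add_add_le _ _ _ _
    _ ≤ (K₁ * dist x x' + K₂ * dist y y') + (C₁ * dist x x' + C₂ * dist y y') :=
        add_le_add (hF x x' y y') (hG x x' y y')
    _ = (K₁ + C₁) * dist x x' + (K₂ + C₂) * dist y y' := by ring

end LipschitzBound₂

namespace HasLipschitzSelection

variable {A : X → Set Y} {L : ℝ} {F : X → Y → ℝ} {K₁ K₂ : ℝ}

theorem sSup_image_le (hA : HasLipschitzSelection A L) (hF : LipschitzBound₂ F K₁ K₂)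
    (hK₂ : 0 ≤ K₂) {x x' : X} (hne : (A x).Nonempty) (hbdd : BddAbove (F x' '' A x')) :
    sSup (F x '' A x) ≤ sSup (F x' '' A x') + (K₁ + K₂ * L) * dist x x' := by
  refine csSup_le (hne.image _) ?_
  rintro _ ⟨y, hy, rfl⟩
  obtain ⟨y', hy', hyy'⟩ := hA x x' y hy
  calc F x y ≤ F x' y' + dist (F x y) (F x' y') := by
        linarith [Real.sub_le_dist (F x y) (F x' y')]
    _ ≤ sSup (F x' '' A x') + (K₁ * dist x x' + K₂ * (L * dist x x')) := by
        gcongr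
        · exact le_csSup hbdd (mem_image_of_mem _ hy')
        · exact (hF x x' y y').trans (by gcongr)
    _ = sSup (F x' '' A x') + (K₁ + K₂ * L) * dist x x' := by ring

theorem dist_sSup_image_le (hA : HasLipschitzSelection A L) (hF : LipschitzBound₂ F K₁ K₂)
    (hK₂ : 0 ≤ K₂) (hne : ∀ x, (A x).Nonempty) (hcpt : ∀ x, IsCompact (A x)) (x x' : X) :
    dist (sSup (F x '' A x)) (sSup (F x' '' A x')) ≤ (K₁ + K₂ * L) * dist x x' := by
  have hbdd (z : X) : BddAbove (F z '' A z) :=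
    ((hcpt z).image (hF.lipschitzWith_right z).continuous).bddAbove
  have h₁ := hA.sSup_image_le hF hK₂ (hne x) (hbdd x')
  have h₂ := hA.sSup_image_le hF hK₂ (hne x') (hbdd x)
  rw [dist_comm x'] at h₂
  rw [Real.dist_eq, abs_sub_le_iff]
  constructor <;> linarith

end HasLipschitzSelection

theorem LipschitzBound₂.bellman {X' Y' : Type*} [PseudoMetricSpace X'] [PseudoMetricSpace Y']
    {Q : X → Y → ℝ} {K₁ K₂ : ℝ} {A : X → Set Y} {L : ℝ} {f : X' → Y' → X} {g : X' → Y' → ℝ}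
    {a b c d γ : ℝ} (hQ : LipschitzBound₂ Q K₁ K₂) (hK₂ : 0 ≤ K₂) (hK : 0 ≤ K₁ + K₂ * L)
    (hA : HasLipschitzSelection A L) (hne : ∀ x, (A x).Nonempty) (hcpt : ∀ x, IsCompact (A x))
    (hf : LipschitzBound₂ f a b) (hg : LipschitzBound₂ g c d) (hγ : 0 ≤ γ) :
    LipschitzBound₂ (fun ξ v => g ξ v + γ * sSup (Q (f ξ v) '' A (f ξ v)))
      (c + γ * (K₁ + K₂ * L) * a) (d + γ * (K₁ + K₂ * L) * b) := by
  have hV (x x' : X) : dist (γ * sSup (Q x '' A x)) (γ * sSup (Q x' '' A x'))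
      ≤ γ * (K₁ + K₂ * L) * dist x x' := by
    rw [Real.dist_eq, ← mul_sub, abs_mul, abs_of_nonneg hγ, ← Real.dist_eq, mul_assoc]
    exact mul_le_mul_of_nonneg_left (hA.dist_sSup_image_le hQ hK₂ hne hcpt x x') hγ
  exact hg.add (hf.comp_left (V := fun x => γ * sSup (Q x '' A x)) hV (by positivity))

/-- Lipschitz continuity of the iterated Q-functions, with
iteratively defined Lipschitz constants. -/
theorem q_iteration_lipschitz
    (n m : ℕ)
    (f : (Fin n → ℝ) → (Fin m → ℝ) → (Fin n → ℝ))
    (g : (Fin n → ℝ) → (Fin m → ℝ) → ℝ)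
    (Lfξ Lfv Lgξ Lgv LA : ℝ)
    (hLfξ : 0 ≤ Lfξ) (hLfv : 0 ≤ Lfv) (hLgξ : 0 ≤ Lgξ) (hLgv : 0 ≤ Lgv) (hLA : 0 ≤ LA)
    (γ : ℝ) (hγ : γ ∈ Set.Ioo (0:ℝ) 1)
    (hf : ∀ ξ ξ' v v', ‖f ξ v - f ξ' v'‖ ≤ Lfξ * ‖ξ - ξ'‖ + Lfv * ‖v - v'‖)
    (hg : ∀ ξ ξ' v v', |g ξ v - g ξ' v'| ≤ Lgξ * ‖ξ - ξ'‖ + Lgv * ‖v - v'‖)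
    (A : (Fin n → ℝ) → Set (Fin m → ℝ))
    (hAne : ∀ ξ, (A ξ).Nonempty) (hAcpt : ∀ ξ, IsCompact (A ξ))
    (hAlip : ∀ ξ ξ', ∀ v ∈ A ξ, ∃ v' ∈ A ξ', ‖v - v'‖ ≤ LA * ‖ξ - ξ'‖)
    (q : ℕ → (Fin n → ℝ) → (Fin m → ℝ) → ℝ)
    (hq0 : ∃ c, ∀ ξ v, q 0 ξ v = c)
    (hqrec : ∀ k ξ v, q (k + 1) ξ v
        = g ξ v + γ * sSup ((fun v' => q k (f ξ v) v') '' A (f ξ v)))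
    (Lξ Lv : ℕ → ℝ)
    (hL1 : Lξ 1 = Lgξ ∧ Lv 1 = Lgv)
    (hLrecξ : ∀ k ≥ 1, Lξ (k + 1) = γ * Lξ k * Lfξ + γ * Lv k * LA * Lfξ + Lgξ)
    (hLrecv : ∀ k ≥ 1, Lv (k + 1) = γ * Lξ k * Lfv + γ * Lv k * LA * Lfv + Lgv) :
    ∀ k ≥ 1, ∀ ξ ξ' v v',
      |q k ξ v - q k ξ' v'| ≤ Lξ k * ‖ξ - ξ'‖ + Lv k * ‖v - v'‖ := by
  obtain ⟨c, hc⟩ := hq0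
  have hγ0 : 0 ≤ γ := hγ.1.le
  have hfL : LipschitzBound₂ f Lfξ Lfv := by simpa only [LipschitzBound₂, dist_eq_norm] using hf
  have hgL : LipschitzBound₂ g Lgξ Lgv := by
    simpa only [LipschitzBound₂, dist_eq_norm, Real.norm_eq_abs] using hg
  have hAL : HasLipschitzSelection A LA := by
    simpa only [HasLipschitzSelection, dist_eq_norm] using hAlip
  have step (k : ℕ) (K₁ K₂ : ℝ) (h₁ : 0 ≤ K₁) (h₂ : 0 ≤ K₂) (hQ : LipschitzBound₂ (q k) K₁ K₂) :
      LipschitzBound₂ (q (k + 1)) (γ * K₁ * Lfξ + γ * K₂ * LA * Lfξ + Lgξ)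
        (γ * K₁ * Lfv + γ * K₂ * LA * Lfv + Lgv) := by
    convert hQ.bellman h₂ (by positivity) hAL hAne hAcpt hfL hgL hγ0 using 1
    · exact funext₂ (hqrec k)
    all_goals ring
  have hLip : ∀ k ≥ 1, 0 ≤ Lξ k ∧ 0 ≤ Lv k ∧ LipschitzBound₂ (q k) (Lξ k) (Lv k) := by
    refine Nat.le_induction ?_ fun k hk ⟨h₁, h₂, hQ⟩ => ?_
    · have hq₀ : q 0 = fun _ _ => c := funext₂ hc
      rw [hL1.1, hL1.2]
      refine ⟨hLgξ, hLgv, ?_⟩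
      simpa using step 0 0 0 le_rfl le_rfl (hq₀ ▸ lipschitzBound₂_const c)
    · rw [hLrecξ k hk, hLrecv k hk]
      exact ⟨by positivity, by positivity, step k _ _ h₁ h₂ hQ⟩
  intro k hk ξ ξ' v v'
  simpa only [dist_eq_norm, Real.norm_eq_abs] using (hLip k hk).2.2 ξ ξ' v v'
end

section
/- If γ(L_fξ + L_A L_fv) < 1 and all constants are nonnegative, then the sequences L_ξ⁽ᵏ⁾ and L_v⁽ᵏ⁾ defined by the recursion L_ξ⁽ᵏ⁾ = γ L_fξ (L_ξ⁽ᵏ⁻¹⁾ + L_A L_v⁽ᵏ⁻¹⁾) + L_gξ, L_v⁽ᵏ⁾ = γ L_fv (L_ξ⁽ᵏ⁻¹⁾ + L_A L_v⁽ᵏ⁻¹⁾) + L_gv, with L_ξ⁽¹⁾ = L_gξ, L_v⁽¹⁾ = L_gv, are uniformly bounded: there exist L_ξ^max, L_v^max with L_ξ⁽ᵏ⁾ ≤ L_ξ^max and L_v⁽ᵏ⁾ ≤ L_v^max for all k ≥ 1. -/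
/-!
Both recursions depend on the previous step only through `S k = Lξ k + LA * Lv k`, and this
combination obeys the scalar affine recursion `S (k + 1) = c * S k + d` with
`c = γ * (Lfξ + LA * Lfv) < 1` and `d = Lgξ + LA * Lgv`. Such a recursion never climbs above
`max (S 1) (d / (1 - c))`, the larger of its start and its fixed point, and `Lξ (k + 1)`,
`Lv (k + 1)` are nonnegative multiples of `S k` plus constants.
-/

theorem le_max_div_one_sub_of_succ_le_mul_add {m : ℕ} {c d : ℝ} {u : ℕ → ℝ}
    (hc₀ : 0 ≤ c) (hc₁ : c < 1) (hu : ∀ n ≥ m, u (n + 1) ≤ c * u n + d) :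
    ∀ n ≥ m, u n ≤ max (u m) (d / (1 - c)) := by
  set B := max (u m) (d / (1 - c))
  have hfixed : c * B + d ≤ B := by
    have : d / (1 - c) ≤ B := le_max_right _ _
    rw [div_le_iff₀ (by linarith)] at this
    linarith
  intro n hn
  induction n, hn using Nat.le_induction with
  | base => exact le_max_left _ _
  | succ n hn ih =>
    calc u (n + 1) ≤ c * u n + d := hu n hn
      _ ≤ c * B + d := by gcongr
      _ ≤ B := hfixed

theorem le_max_mul_add_of_succ_eq_mul_add {m : ℕ} {a b B : ℝ} {f S : ℕ → ℝ} (ha : 0 ≤ a)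
    (hS : ∀ k ≥ m, S k ≤ B) (hf : ∀ k ≥ m, f (k + 1) = a * S k + b) :
    ∀ k ≥ m, f k ≤ max (f m) (a * B + b) := by
  intro k hk
  rcases hk.eq_or_lt with rfl | hlt
  · exact le_max_left _ _
  · obtain ⟨n, rfl⟩ := Nat.exists_eq_add_of_lt hlt
    rw [hf (m + n) (by omega)]
    exact le_max_of_le_right (by gcongr; exact hS _ (by omega))

theorem lipschitz_recursion_bounded_general
    (γ Lfξ Lfv LA Lgξ Lgv : ℝ)
    (hγ : 0 ≤ γ) (hLfξ : 0 ≤ Lfξ) (hLfv : 0 ≤ Lfv) (hLA : 0 ≤ LA)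
    (hcontr : γ * (Lfξ + LA * Lfv) < 1)
    (Lξ Lv : ℕ → ℝ)
    (hrecξ : ∀ k ≥ 1, Lξ (k + 1) = γ * Lfξ * (Lξ k + LA * Lv k) + Lgξ)
    (hrecv : ∀ k ≥ 1, Lv (k + 1) = γ * Lfv * (Lξ k + LA * Lv k) + Lgv) :
    ∃ Lξmax Lvmax : ℝ, ∀ k ≥ 1, Lξ k ≤ Lξmax ∧ Lv k ≤ Lvmax := by
  set S : ℕ → ℝ := fun k ↦ Lξ k + LA * Lv k
  have hS : ∀ k ≥ 1, S (k + 1) ≤ γ * (Lfξ + LA * Lfv) * S k + (Lgξ + LA * Lgv) := by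
    intro k hk
    simp only [S, hrecξ k hk, hrecv k hk]
    linarith
  have hSB := le_max_div_one_sub_of_succ_le_mul_add (by positivity) hcontr hS
  exact ⟨_, _, fun k hk ↦
    ⟨le_max_mul_add_of_succ_eq_mul_add (by positivity) hSB hrecξ k hk,
      le_max_mul_add_of_succ_eq_mul_add (by positivity) hSB hrecv k hk⟩⟩

/-- uniform boundedness of the iterated Lipschitz constants under
the contraction condition γ(L_fξ + L_A L_fv) < 1. -/
theorem lipschitz_recursion_bounded
    (γ Lfξ Lfv LA Lgξ Lgv : ℝ)
    (hγ : 0 ≤ γ) (hLfξ : 0 ≤ Lfξ) (hLfv : 0 ≤ Lfv) (hLA : 0 ≤ LA)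
    (hLgξ : 0 ≤ Lgξ) (hLgv : 0 ≤ Lgv)
    (hcontr : γ * (Lfξ + LA * Lfv) < 1)
    (Lξ Lv : ℕ → ℝ)
    (hL1 : Lξ 1 = Lgξ ∧ Lv 1 = Lgv)
    (hrecξ : ∀ k ≥ 1, Lξ (k + 1) = γ * Lfξ * (Lξ k + LA * Lv k) + Lgξ)
    (hrecv : ∀ k ≥ 1, Lv (k + 1) = γ * Lfv * (Lξ k + LA * Lv k) + Lgv) :
    ∃ Lξmax Lvmax : ℝ, ∀ k ≥ 1, Lξ k ≤ Lξmax ∧ Lv k ≤ Lvmax :=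
  lipschitz_recursion_bounded_general γ Lfξ Lfv LA Lgξ Lgv hγ hLfξ hLfv hLA hcontr Lξ Lv hrecξ hrecv
end
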